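/- Let n, m ≥ 2, let b ≥ a > 0, and let F : ℝ₊ⁿ → Sₘ be continuously differentiable, convex and monotonically non-increasing. Then for every j ∈ {1,…,n} and every x ∈ [a,b]ⁿ there exists t ∈ [a + a/(2(n−1)), b + a/(2(n−1))] (namely t = x_j + a/(2(n−1))) such that for all δ with 0 ≤ δ ≤ a/(4(n−1)): F'(x)((n−1)e_j' − e_j) ⪰ F'((a/2)e_j' + (t−δ)e_j) d_j, where d_j := ((2b−a)/a)(n−1) e_j' − (1/2) e_j. -/

import Mathlib

attribute [local instance] Matrix.frobeniusNormedAddCommGroup Matrix.frobeniusNormedSpace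

noncomputable section

/-- The open positive orthant `ℝ₊ⁿ` in `ℝⁿ`. -/
def posOrth (n : ℕ) : Set (Fin n → ℝ) := {x | ∀ i, 0 < x i}

/-- The Loewner order on real matrices: `A ⪯ B` iff `B - A` is positive semidefinite. -/
def loewnerLE {m : ℕ} (A B : Matrix (Fin m) (Fin m) ℝ) : Prop := (B - A).PosSemidef

/-- The largest eigenvalue `λ_max` of a real (symmetric) matrix. -/
noncomputable def lambdaMax {m : ℕ} (A : Matrix (Fin m) (Fin m) ℝ) : ℝ :=
  sSup {r : ℝ | ∃ v : Fin m → ℝ, v ≠ 0 ∧ A.mulVec v = r • v}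

/-- The spectral norm `‖·‖₂` of a real matrix (operator norm on Euclidean space). -/
noncomputable def spectralNorm' {m : ℕ} (A : Matrix (Fin m) (Fin m) ℝ) : ℝ :=
  ‖LinearMap.toContinuousLinearMap (Matrix.toEuclideanLin A)‖

/-- `e_j`, the `j`-th standard unit vector of `ℝⁿ`. -/
def unitVec (n : ℕ) (j : Fin n) : Fin n → ℝ := Pi.single j 1

/-- `e_j' = 𝟙 - e_j`. -/
def coVec (n : ℕ) (j : Fin n) : Fin n → ℝ := (fun _ => (1:ℝ)) - Pi.single j 1

/-- The direction `(n-1) e_j' - e_j`. -/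
noncomputable def dirVec (n : ℕ) (j : Fin n) : Fin n → ℝ :=
  ((n:ℝ) - 1) • coVec n j - unitVec n j

/-- `z_{j,k} = (a/2) e_j' + (a + k·a/(4(n-1))) e_j`. -/
noncomputable def zVec (n : ℕ) (a : ℝ) (j : Fin n) (k : ℤ) : Fin n → ℝ :=
  (a/2) • coVec n j + (a + (k:ℝ) * a / (4 * ((n:ℝ) - 1))) • unitVec n j

/-- `d_j = ((2b-a)/a)(n-1) e_j' - (1/2) e_j`. -/
noncomputable def dVec (n : ℕ) (a b : ℝ) (j : Fin n) : Fin n → ℝ :=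
  ((2*b - a)/a * ((n:ℝ) - 1)) • coVec n j - (1/2 : ℝ) • unitVec n j

/-- `K = ⌈4(n-1)b/a⌉ - 4n - 3`. -/
noncomputable def Kbound (n : ℕ) (a b : ℝ) : ℤ := ⌈4 * ((n:ℝ) - 1) * b / a⌉ - 4 * (n:ℤ) - 3

/-! Put `y = (a/2) e_j' + (t - δ) e_j` and `c = 2(n-1)/a`. The choice of `t` makes
`(n-1) e_j' - e_j ≤ c (x - y) ≤ d_j` coordinatewise. Each `F'(z)` is antitone, and adding the
convexity inequalities at `x` and at `y` gives `F'(y)(x - y) ⪯ F'(x)(x - y)`, so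
`F'(y) d_j ⪯ c F'(y)(x - y) ⪯ c F'(x)(x - y) ⪯ F'(x)((n-1) e_j' - e_j)`. -/

-- Under `MatrixOrder`, `A ≤ B` unfolds to `loewnerLE A B`.
open scoped MatrixOrder

section OrderedGroup

variable {E M G : Type*} [AddCommGroup E] [AddCommGroup M] [PartialOrder M] [IsOrderedAddMonoid M]
  [FunLike G E M] [AddMonoidHomClass G E M]

lemma antitone_of_map_nonpos [PartialOrder E] [IsOrderedAddMonoid E] {f : G}
    (hf : ∀ d, 0 ≤ d → f d ≤ 0) : Antitone f := fun d d' h ↦ by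
  simpa only [map_sub, sub_nonpos] using hf (d' - d) (sub_nonneg.2 h)

lemma apply_sub_le_apply_sub_of_supporting {F : E → M} {F' : E → G} {x y : E}
    (hxy : F' y (x - y) ≤ F x - F y) (hyx : F' x (y - x) ≤ F y - F x) :
    F' y (x - y) ≤ F' x (x - y) :=
  calc F' y (x - y) ≤ F x - F y := hxy
    _ = -(F y - F x) := (neg_sub _ _).symm
    _ ≤ -F' x (y - x) := neg_le_neg hyx
    _ = F' x (x - y) := by rw [← map_neg, neg_sub]

end OrderedGroup

lemma coVec_apply (n : ℕ) (j i : Fin n) : coVec n j i = if i = j then 0 else 1 := by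
  simp only [coVec, Pi.sub_apply, Pi.single_apply]
  split_ifs <;> norm_num

lemma unitVec_apply (n : ℕ) (j i : Fin n) : unitVec n j i = if i = j then 1 else 0 :=
  Pi.single_apply j 1 i

def axisPoint (n : ℕ) (a : ℝ) (j : Fin n) (s : ℝ) : Fin n → ℝ :=
  (a/2) • coVec n j + s • unitVec n j

lemma axisPoint_apply (n : ℕ) (a : ℝ) (j : Fin n) (s : ℝ) (i : Fin n) :
    axisPoint n a j s i = if i = j then s else a / 2 := by
  simp only [axisPoint, Pi.add_apply, Pi.smul_apply, coVec_apply, unitVec_apply, smul_eq_mul]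
  split_ifs <;> ring

lemma dirVec_apply (n : ℕ) (j i : Fin n) : dirVec n j i = if i = j then -1 else (n : ℝ) - 1 := by
  simp only [dirVec, Pi.sub_apply, Pi.smul_apply, coVec_apply, unitVec_apply, smul_eq_mul]
  split_ifs <;> ring

lemma dVec_apply (n : ℕ) (a b : ℝ) (j i : Fin n) :
    dVec n a b j i = if i = j then -1 / 2 else (2 * b - a) / a * ((n : ℝ) - 1) := by
  simp only [dVec, Pi.sub_apply, Pi.smul_apply, coVec_apply, unitVec_apply, smul_eq_mul]
  split_ifs <;> ring

section Shift

variable {n : ℕ} {a δ : ℝ} {j : Fin n} {x : Fin n → ℝ}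

lemma one_le_natCast_sub_one (hn : 2 ≤ n) : (1 : ℝ) ≤ n - 1 := by
  have : (2 : ℝ) ≤ n := by exact_mod_cast hn
  linarith

lemma axisPoint_mem_posOrth (hn : 2 ≤ n) (ha : 0 < a) (hx : ∀ i, a ≤ x i)
    (hδ : δ ≤ a / (4 * ((n : ℝ) - 1))) :
    axisPoint n a j (x j + a / (2 * ((n : ℝ) - 1)) - δ) ∈ posOrth n := by
  have hN := one_le_natCast_sub_one hn
  intro i
  rw [axisPoint_apply]
  split_ifs
  · have : a / (4 * ((n : ℝ) - 1)) ≤ a / (2 * ((n : ℝ) - 1)) := by gcongr; norm_num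
    linarith [hx j]
  · positivity

lemma dirVec_le_smul_sub_axisPoint (hn : 2 ≤ n) (ha : 0 < a) (hx : ∀ i, a ≤ x i) (hδ : 0 ≤ δ) :
    dirVec n j ≤ (2 * ((n : ℝ) - 1) / a) •
      (x - axisPoint n a j (x j + a / (2 * ((n : ℝ) - 1)) - δ)) := by
  have hN := one_le_natCast_sub_one hn
  intro i
  simp only [Pi.smul_apply, Pi.sub_apply, axisPoint_apply, dirVec_apply, smul_eq_mul]
  split_ifs with hij
  · subst hij
    field_simp
    nlinarith
  · field_simp
    nlinarith [hx i]

lemma smul_sub_axisPoint_le_dVec {b : ℝ} (hn : 2 ≤ n) (ha : 0 < a) (hx : ∀ i, x i ≤ b)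
    (hδ : δ ≤ a / (4 * ((n : ℝ) - 1))) :
    (2 * ((n : ℝ) - 1) / a) • (x - axisPoint n a j (x j + a / (2 * ((n : ℝ) - 1)) - δ))
      ≤ dVec n a b j := by
  have hN := one_le_natCast_sub_one hn
  intro i
  simp only [Pi.smul_apply, Pi.sub_apply, axisPoint_apply, dVec_apply, smul_eq_mul]
  split_ifs with hij
  · subst hij
    rw [le_div_iff₀ (by positivity)] at hδ
    field_simp
    nlinarith
  · field_simp
    nlinarith [hx i]

end Shift

theorem exists_shift_loewner_ge_general {n m : ℕ} (hn : 2 ≤ n)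
    {a b : ℝ} (ha : 0 < a)
    (F : (Fin n → ℝ) → Matrix (Fin m) (Fin m) ℝ)
    (F' : (Fin n → ℝ) → (Fin n → ℝ) →L[ℝ] Matrix (Fin m) (Fin m) ℝ)
    (hmono : ∀ x ∈ posOrth n, ∀ d : Fin n → ℝ, 0 ≤ d → loewnerLE (F' x d) 0)
    (hconv : ∀ x ∈ posOrth n, ∀ x₀ ∈ posOrth n, loewnerLE (F' x₀ (x - x₀)) (F x - F x₀))
    :
    ∀ j : Fin n, ∀ x ∈ Set.Icc (fun _ => a) (fun _ => b : Fin n → ℝ),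
      ∃ t : ℝ, t = x j + a / (2 * ((n:ℝ) - 1)) ∧
        t ∈ Set.Icc (a + a / (2 * ((n:ℝ) - 1))) (b + a / (2 * ((n:ℝ) - 1))) ∧
        ∀ δ : ℝ, 0 ≤ δ → δ ≤ a / (4 * ((n:ℝ) - 1)) →
          loewnerLE (F' ((a/2) • coVec n j + (t - δ) • unitVec n j) (dVec n a b j))
            (F' x (dirVec n j)) := by
  intro j x hx
  have hxa : ∀ i, a ≤ x i := hx.1
  have hxb : ∀ i, x i ≤ b := hx.2
  refine ⟨_, rfl, ⟨by linarith [hxa j], by linarith [hxb j]⟩, fun δ hδ₀ hδ ↦ ?_⟩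
  set y := axisPoint n a j (x j + a / (2 * ((n : ℝ) - 1)) - δ)
  set c := 2 * ((n : ℝ) - 1) / a
  have hxpos : x ∈ posOrth n := fun i ↦ ha.trans_le (hxa i)
  have hypos : y ∈ posOrth n := axisPoint_mem_posOrth hn ha hxa hδ
  have hc : 0 ≤ c := by have := one_le_natCast_sub_one hn; positivity
  show F' y (dVec n a b j) ≤ F' x (dirVec n j)
  calc F' y (dVec n a b j)
      ≤ F' y (c • (x - y)) :=
        antitone_of_map_nonpos (hmono y hypos) (smul_sub_axisPoint_le_dVec hn ha hxb hδ)
    _ = c • F' y (x - y) := map_smul ..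
    _ ≤ c • F' x (x - y) := smul_le_smul_of_nonneg_left
        (apply_sub_le_apply_sub_of_supporting (hconv x hxpos y hypos) (hconv y hypos x hxpos)) hc
    _ = F' x (c • (x - y)) := (map_smul ..).symm
    _ ≤ F' x (dirVec n j) :=
        antitone_of_map_nonpos (hmono x hxpos) (dirVec_le_smul_sub_axisPoint hn ha hxa hδ₀)

/-- equation (13). For every `j` and `x ∈ [a,b]ⁿ` there is
`t ∈ [a + a/(2(n-1)), b + a/(2(n-1))]` (namely `t = x_j + a/(2(n-1))`) such that for all
`0 ≤ δ ≤ a/(4(n-1))`: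
`F'(x)((n-1)e_j' - e_j) ⪰ F'((a/2)e_j' + (t-δ)e_j) d_j`. -/
theorem exists_shift_loewner_ge {n m : ℕ} (hn : 2 ≤ n) (hm : 2 ≤ m)
    {a b : ℝ} (ha : 0 < a) (hab : a ≤ b)
    (F : (Fin n → ℝ) → Matrix (Fin m) (Fin m) ℝ)
    (F' : (Fin n → ℝ) → (Fin n → ℝ) →L[ℝ] Matrix (Fin m) (Fin m) ℝ)
    (hF_symm : ∀ x ∈ posOrth n, (F x).IsSymm)
    (hF'_symm : ∀ x ∈ posOrth n, ∀ d : Fin n → ℝ, (F' x d).IsSymm)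
    (hderiv : ∀ x ∈ posOrth n, HasFDerivAt F (F' x) x)
    (hcont : ContinuousOn F' (posOrth n))
    (hmono : ∀ x ∈ posOrth n, ∀ d : Fin n → ℝ, 0 ≤ d → loewnerLE (F' x d) 0)
    (hconv : ∀ x ∈ posOrth n, ∀ x₀ ∈ posOrth n, loewnerLE (F' x₀ (x - x₀)) (F x - F x₀))
    :
    ∀ j : Fin n, ∀ x ∈ Set.Icc (fun _ => a) (fun _ => b : Fin n → ℝ),
      ∃ t : ℝ, t = x j + a / (2 * ((n:ℝ) - 1)) ∧
        t ∈ Set.Icc (a + a / (2 * ((n:ℝ) - 1))) (b + a / (2 * ((n:ℝ) - 1))) ∧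
        ∀ δ : ℝ, 0 ≤ δ → δ ≤ a / (4 * ((n:ℝ) - 1)) →
          loewnerLE (F' ((a/2) • coVec n j + (t - δ) • unitVec n j) (dVec n a b j))
            (F' x (dirVec n j)) :=
  exists_shift_loewner_ge_general hn ha F F' hmono hconv

end
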